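/- Let 0 < β < 1 and let s : ℕ → ℝ satisfy |s(k+1) + β·s(k)| ≤ M for all k and some M ≥ 0. Then limsup_{k→∞} |s(k)| ≤ M/(1 − β). -/

import Mathlib

/-!
The recursion gives `|s (k+1)| ≤ β |s k| + M`, so by induction
`|s k| ≤ β ^ k |s 0| + M / (1 - β)`, the constant being the fixed point of `x ↦ β x + M`.
The geometric term vanishes in the limit.
-/

open Filter Topology

section LinearRecursiveBound

variable {β c : ℝ} {a : ℕ → ℝ}

theorem le_pow_mul_add_div_of_le_mul_add (hβ0 : 0 ≤ β) (hβ1 : β < 1) (hc : 0 ≤ c)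
    (h : ∀ k, a (k + 1) ≤ β * a k + c) (k : ℕ) :
    a k ≤ β ^ k * a 0 + c / (1 - β) := by
  have hβ : 0 < 1 - β := sub_pos.mpr hβ1
  induction k with
  | zero => simpa using div_nonneg hc hβ.le
  | succ k ih =>
    have hfix : β * (c / (1 - β)) + c = c / (1 - β) := by
      field_simp
      ring
    calc a (k + 1) ≤ β * a k + c := h k
      _ ≤ β * (β ^ k * a 0 + c / (1 - β)) + c := by gcongr
      _ = β ^ (k + 1) * a 0 + c / (1 - β) := by rw [pow_succ]; linear_combination hfix

theorem limsup_le_div_of_le_mul_add (hβ0 : 0 ≤ β) (hβ1 : β < 1) (hc : 0 ≤ c)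
    (ha : ∀ k, 0 ≤ a k) (h : ∀ k, a (k + 1) ≤ β * a k + c) :
    limsup a atTop ≤ c / (1 - β) := by
  have hlim : Tendsto (fun k => β ^ k * a 0 + c / (1 - β)) atTop (𝓝 (c / (1 - β))) := by
    simpa using ((tendsto_pow_atTop_nhds_zero_of_lt_one hβ0 hβ1).mul_const (a 0)).add_const
      (c / (1 - β))
  calc limsup a atTop
      ≤ limsup (fun k => β ^ k * a 0 + c / (1 - β)) atTop :=
        limsup_le_limsup (.of_forall (le_pow_mul_add_div_of_le_mul_add hβ0 hβ1 hc h))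
          (isCoboundedUnder_le_of_le atTop ha) hlim.isBoundedUnder_le
    _ = c / (1 - β) := hlim.limsup_eq

end LinearRecursiveBound

theorem abs_succ_le_mul_abs_add {β M : ℝ} {s : ℕ → ℝ} (hβ : 0 ≤ β)
    (hb : ∀ k, |s (k + 1) + β * s k| ≤ M) (k : ℕ) :
    |s (k + 1)| ≤ β * |s k| + M := by
  calc |s (k + 1)| = |(s (k + 1) + β * s k) - β * s k| := by ring_nf
    _ ≤ |s (k + 1) + β * s k| + |β * s k| := abs_sub _ _
    _ ≤ β * |s k| + M := by rw [abs_mul, abs_of_nonneg hβ]; linarith [hb k]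

theorem stmt_16 (β M : ℝ) (h0 : 0 < β) (h1 : β < 1) (hM : 0 ≤ M)
    (s : ℕ → ℝ) (hb : ∀ k, |s (k + 1) + β * s k| ≤ M) :
    Filter.limsup (fun k => |s k|) Filter.atTop ≤ M / (1 - β) :=
  limsup_le_div_of_le_mul_add h0.le h1 hM (fun k => abs_nonneg (s k))
    (abs_succ_le_mul_abs_add h0.le hb)
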